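/- arXiv:0705.4362 — 3 statements merged into one kernel-verified Lean document; each statement's English description precedes it below -/
import Mathlib

section
/- Let n ≥ 2 and let z_1, …, z_{n−1} be pairwise distinct complex numbers. For 1 ≤ k ≤ n−1 set α_k = (−1)^{n+k−1} / [∏_{i>k}(z_i − z_k) · ∏_{j<k}(z_k − z_j)], and define the vector function Y(z) = (Σ_{k=1}^{n−1} α_k/(z−z_k)) · 𝟙, where 𝟙 = (1,1,…,1) ∈ ℂ^n. Then Y is not identically zero and Y′(z) = −A(z)·Y(z) for all z ∈ ℂ ∖ {z_1, …, z_{n−1}}. -/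
open Matrix

/-- The n×n complex permutation matrix of the transposition (a b). -/
noncomputable def permP (n : ℕ) (a b : Fin n) : Matrix (Fin n) (Fin n) ℂ :=
  Matrix.of fun i j => if i = Equiv.swap a b j then 1 else 0

/-- P_k = P(1,k+1) for 1 ≤ k ≤ n-1: with 0-based indices, the transposition (0, k+1). -/
noncomputable def Pk (n : ℕ) [NeZero n] (k : Fin (n - 1)) : Matrix (Fin n) (Fin n) ℂ :=
  permP n 0 ⟨k.1 + 1, by have := k.2; omega⟩

/-- A(z) = Σ_{k=1}^{n-1} P_k / (z - z_k). -/
noncomputable def Amat (n : ℕ) [NeZero n] (z : Fin (n - 1) → ℂ) (w : ℂ) :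
    Matrix (Fin n) (Fin n) ℂ :=
  ∑ k : Fin (n - 1), (w - z k)⁻¹ • Pk n k

/-- α_k = (-1)^{n+k-1} / [∏_{i>k}(z_i - z_k) · ∏_{j<k}(z_k - z_j)], where `k : Fin (n-1)`
represents the 1-based index k+1 (so the sign is (-1)^{n + k.1}). -/
noncomputable def alph (n : ℕ) (z : Fin (n - 1) → ℂ) (k : Fin (n - 1)) : ℂ :=
  (-1 : ℂ) ^ (n + k.1) /
    ((∏ i ∈ Finset.univ.filter (fun i => k < i), (z i - z k)) *
     (∏ j ∈ Finset.univ.filter (fun j => j < k), (z k - z j)))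

/-- Y(z) = (Σ_k α_k/(z - z_k)) · 𝟙. -/
noncomputable def Yfun (n : ℕ) (z : Fin (n - 1) → ℂ) (u : ℂ) : Fin n → ℂ :=
  (∑ k : Fin (n - 1), alph n z k / (u - z k)) • (fun _ => (1 : ℂ))

/-!
By partial fractions (Lagrange interpolation of the constant `1` at the nodes `z_k`), the
`α_k` are the barycentric weights and `Σ α_k / (z - z_k) = 1 / ∏ (z - z_k)`, so
`Y = f • 𝟙` with `f = 1 / ∏ (z - z_k)`. Every `P_k` fixes `𝟙`, hence `A Y = (Σ 1 / (z - z_k)) Y`,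
and `Σ 1 / (z - z_k) = -f' / f` by logarithmic differentiation.
-/

open Finset Lagrange

theorem Lagrange.sum_nodalWeight_mul_inv_sub {F ι : Type*} [Field F] [DecidableEq ι]
    {s : Finset ι} {v : ι → F} {x : F} (hvs : Set.InjOn v s) (hs : s.Nonempty)
    (hx : ∀ i ∈ s, x ≠ v i) :
    ∑ i ∈ s, nodalWeight s v i * (x - v i)⁻¹ = (∏ i ∈ s, (x - v i))⁻¹ := by
  refine eq_inv_of_mul_eq_one_right ?_
  simpa only [Pi.one_apply, interpolate_one hvs hs, Polynomial.eval_one, mul_one, eval_nodal] using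
    (eval_interpolate_not_at_node 1 hx).symm

section LogDeriv

variable {𝕜 ι : Type*} [NontriviallyNormedField 𝕜] [DecidableEq ι] (s : Finset ι) (z : ι → 𝕜)
  {w : 𝕜}

theorem hasDerivAt_prod_sub (hw : ∀ k ∈ s, w ≠ z k) :
    HasDerivAt (fun u => ∏ k ∈ s, (u - z k)) ((∑ k ∈ s, (w - z k)⁻¹) * ∏ k ∈ s, (w - z k)) w := by
  refine (HasDerivAt.fun_finsetProd fun k _ => (hasDerivAt_id w).sub_const (z k)).congr_deriv ?_
  rw [sum_mul]
  refine sum_congr rfl fun k hk => ?_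
  rw [← mul_prod_erase s _ hk, inv_mul_cancel_left₀ (sub_ne_zero.2 (hw k hk)), id, smul_eq_mul,
    mul_one]

theorem hasDerivAt_inv_prod_sub (hw : ∀ k ∈ s, w ≠ z k) :
    HasDerivAt (fun u => (∏ k ∈ s, (u - z k))⁻¹)
      (-((∑ k ∈ s, (w - z k)⁻¹) * (∏ k ∈ s, (w - z k))⁻¹)) w := by
  have hP : ∏ k ∈ s, (w - z k) ≠ 0 := prod_ne_zero_iff.2 fun k hk => sub_ne_zero.2 (hw k hk)
  refine ((hasDerivAt_prod_sub s z hw).inv hP).congr_deriv ?_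
  field_simp

end LogDeriv

theorem permP_eq_permMatrix (n : ℕ) (a b : Fin n) :
    permP n a b = (Equiv.swap a b).permMatrix ℂ := by
  ext i j
  simp [permP, PEquiv.toMatrix_apply, ← Equiv.swap_apply_eq_iff]

theorem Amat_mulVec_const (n : ℕ) [NeZero n] (z : Fin (n - 1) → ℂ) (w c : ℂ) :
    Amat n z w *ᵥ (fun _ => c) = fun _ => (∑ k, (w - z k)⁻¹) * c := by
  ext i
  simp [Amat, Pk, sum_mulVec, smul_mulVec, permP_eq_permMatrix, permMatrix_mulVec, sum_mul]

theorem alph_eq_nodalWeight (n : ℕ) (z : Fin (n - 1) → ℂ) (k : Fin (n - 1)) :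
    alph n z k = nodalWeight univ z k := by
  have hsplit : ∏ j ∈ univ.erase k, (z k - z j) =
      (∏ i ∈ Ioi k, (z k - z i)) * ∏ j ∈ Iio k, (z k - z j) := by
    rw [← compl_singleton, ← Ioi_disjUnion_Iio, prod_disjUnion]
  have hflip : ∏ i ∈ Ioi k, (z i - z k) = (-1) ^ (n - 1 - 1 - k.1) * ∏ i ∈ Ioi k, (z k - z i) := by
    rw [← Fin.card_Ioi, ← prod_neg]
    simp only [neg_sub]
  have hsign : (-1 : ℂ) ^ (n + k.1) = (-1) ^ (n - 1 - 1 - k.1) := by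
    rw [show n + k.1 = (n - 1 - 1 - k.1) + 2 * (k.1 + 1) by omega, pow_add, pow_mul, neg_one_sq,
      one_pow, mul_one]
  rw [alph, nodalWeight, prod_inv_distrib, hsplit, filter_lt_eq_Ioi, filter_gt_eq_Iio, hflip,
    hsign, mul_assoc, div_mul_cancel_left₀ (pow_ne_zero _ (neg_ne_zero.2 one_ne_zero))]

theorem Yfun_eq_const (n : ℕ) (hn : 2 ≤ n) (z : Fin (n - 1) → ℂ) (hz : Function.Injective z)
    {w : ℂ} (hw : ∀ k, w ≠ z k) :
    Yfun n z w = fun _ => (∏ k, (w - z k))⁻¹ := by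
  have : Nonempty (Fin (n - 1)) := ⟨⟨0, by omega⟩⟩
  ext i
  rw [← sum_nodalWeight_mul_inv_sub hz.injOn univ_nonempty fun k _ => hw k]
  simp [Yfun, alph_eq_nodalWeight, div_eq_mul_inv]

/-- Y is a not-identically-zero rational solution of Y' = -A(z)·Y. -/
theorem rational_solution_Y1 (n : ℕ) [NeZero n] (hn : 2 ≤ n)
    (z : Fin (n - 1) → ℂ) (hz : Function.Injective z) :
    (∃ w : ℂ, (∀ k, w ≠ z k) ∧ Yfun n z w ≠ 0) ∧
    (∀ w : ℂ, (∀ k, w ≠ z k) → ∀ i,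
      HasDerivAt (fun u => Yfun n z u i) (-(Amat n z w *ᵥ Yfun n z w) i) w) := by
  have hnodes : IsOpen {u : ℂ | ∀ k, u ≠ z k} := by
    simpa [Set.compl_def, Set.mem_range, eq_comm] using (Set.finite_range z).isClosed.isOpen_compl
  refine ⟨?_, fun w hw i => ?_⟩
  · obtain ⟨w, hw⟩ := (Set.finite_range z).infinite_compl.nonempty
    have hw' : ∀ k, w ≠ z k := fun k hk => hw ⟨k, hk.symm⟩
    refine ⟨w, hw', fun h => ?_⟩
    have := congrFun (Yfun_eq_const n hn z hz hw') 0
    simp only [h, Pi.zero_apply, zero_eq_inv] at this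
    exact prod_ne_zero_iff.2 (fun k _ => sub_ne_zero.2 (hw' k)) this.symm
  · have hY : (fun u => Yfun n z u i) =ᶠ[nhds w] fun u => (∏ k, (u - z k))⁻¹ := by
      filter_upwards [hnodes.mem_nhds hw] with u hu
      rw [Yfun_eq_const n hn z hz hu]
    rw [Yfun_eq_const n hn z hz hw, Amat_mulVec_const]
    exact (hasDerivAt_inv_prod_sub univ z fun k _ => hw k).congr_of_eventuallyEq hY
end

section
/- Let n ≥ 3 and let z_1, …, z_{n−1} be pairwise distinct complex numbers. Then there exist n vector functions Y_1, …, Y_n, each of the form Y_j(z) = Σ_{k=1}^{n−1} L_{k,j}/(z−z_k) + Q_j(z) with L_{k,j} ∈ ℂ^n and Q_j a vector of polynomials in z, such that Y_j′(z) = −A(z)·Y_j(z) for all z ∈ ℂ ∖ {z_1, …, z_{n−1}} and 1 ≤ j ≤ n, and the determinant of the n×n matrix with columns Y_1(z), …, Y_n(z) is not identically zero on ℂ ∖ {z_1, …, z_{n−1}}. In particular, for ρ = −1 the Knizhnik–Zamolodchikov system W′ = ρ·A(z)·W has a rational fundamental solution. -/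
open Matrix

/-!
Put `f = ∏ₖ (X - z k)`. Since `f' / f = ∑ₖ 1 / (X - z k)`, the function `Y = N / f` solves
`Y' = -A Y` as soon as `N` solves `f N' = ∑ₖ (f / (X - z k)) (1 - P k) N`, and this system has
polynomial solutions. A vector with `N 0 = α` and `N (k + 1) = α + (X - z k) D k` solves it when
`α' = -∑ₖ D k` and `(X - z k) (D k)' = -α'`. This gives the constant solution (`α = 1`, `D = 0`),
`n - 2` solutions with `α = 0` and `D` a constant vector of sum zero, and a logarithmic one,
`α = F`, `D = -H`, where `F' = f`, `(H k)' = f / (X - z k)` and `∑ₖ H k = f`.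

At a point `w` off the nodes, a kernel vector `v` of the matrix of these columns satisfies
`∑ⱼ α j v j = 0` and `∑ⱼ D j m v j = 0` for every `m`. Summing the latter over `m` leaves
`-f(w)` times the coefficient of the logarithmic solution, so that coefficient vanishes, and then
so do all others. Partial fractions of `N / f` give the required shape of `Y`.
-/

open Polynomial Finset

namespace Polynomial

variable {K : Type*} [Field K] [CharZero K]

theorem derivative_surjective : Function.Surjective (derivative : K[X] →ₗ[K] K[X]) := by
  intro p
  induction p using Polynomial.induction_on' with
  | add p q hp hq =>
    obtain ⟨P, rfl⟩ := hp
    obtain ⟨Q, rfl⟩ := hq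
    exact ⟨P + Q, derivative_add⟩
  | monomial k a =>
    refine ⟨C (a / (k + 1)) * X ^ (k + 1), ?_⟩
    rw [derivative_C_mul_X_pow, ← C_mul_X_pow_eq_monomial, Nat.add_sub_cancel]
    congr 2
    push_cast
    field_simp

theorem exists_derivative_eq_and_sum_eq {ι : Type*} [Fintype ι] [Nonempty ι] {f : K[X]}
    {h : ι → K[X]} (hf : derivative f = ∑ m, h m) :
    ∃ H : ι → K[X], (∀ m, derivative (H m) = h m) ∧ ∑ m, H m = f := by
  classical
  choose G hG using fun m => derivative_surjective (h m)
  obtain ⟨m₀⟩ := ‹Nonempty ι›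
  have hc : derivative (f - ∑ m, G m) = 0 := by simp [hf, hG]
  refine ⟨fun m => G m + if m = m₀ then C ((f - ∑ m, G m).coeff 0) else 0, fun m => ?_, ?_⟩
  · dsimp only
    split_ifs <;> simp [hG]
  · rw [sum_add_distrib, sum_ite_eq', if_pos (mem_univ _), ← eq_C_of_derivative_eq_zero hc]
    ring

end Polynomial

namespace Lagrange

variable {F ι : Type*} [Field F] [DecidableEq ι] {s : Finset ι} {v : ι → F}

theorem eval_div_eval_nodal (hvs : Set.InjOn v s) {x : F} (hx : ∀ i ∈ s, x ≠ v i) (p : F[X]) :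
    p.eval x / (nodal s v).eval x =
      ∑ i ∈ s, (x - v i)⁻¹ * (nodalWeight s v i * (p %ₘ nodal s v).eval (v i))
        + (p /ₘ nodal s v).eval x := by
  have hfx : (nodal s v).eval x ≠ 0 := eval_nodal_not_at_node hx
  set R := p %ₘ nodal s v
  have hR : R = interpolate s v (fun i => R.eval (v i)) :=
    eq_interpolate hvs ((degree_modByMonic_lt p nodal_monic).trans_eq degree_nodal)
  have hRx : R.eval x = (nodal s v).eval x *
      ∑ i ∈ s, nodalWeight s v i * (x - v i)⁻¹ * R.eval (v i) := by
    conv_lhs => rw [hR]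
    exact eval_interpolate_not_at_node _ hx
  rw [div_eq_iff hfx]
  conv_lhs => rw [← modByMonic_add_div p (nodal s v)]
  rw [eval_add, eval_mul, hRx, add_mul, sum_mul, mul_sum]
  congr 1
  · exact sum_congr rfl fun i _ => by ring
  · ring

end Lagrange

namespace KZ

variable {n : ℕ}

def nodeRow (k : Fin (n - 1)) : Fin n := ⟨k + 1, by omega⟩

theorem nodeRow_injective : Function.Injective (nodeRow (n := n)) := fun a b h => by
  simpa [nodeRow, Fin.ext_iff] using h

theorem nodeRow_ne_zero [NeZero n] (k : Fin (n - 1)) : nodeRow k ≠ (0 : Fin n) := by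
  simp [nodeRow, Fin.ext_iff]

theorem eq_zero_or_eq_nodeRow [NeZero n] (i : Fin n) : i = 0 ∨ ∃ k, i = nodeRow k := by
  rcases Nat.eq_zero_or_pos i.1 with h | h
  · exact Or.inl (Fin.ext h)
  · exact Or.inr ⟨⟨i - 1, by omega⟩, Fin.ext (by simp [nodeRow]; omega)⟩

def rowCases {α : Type*} (a : α) (b : Fin (n - 1) → α) (i : Fin n) : α :=
  if h : i.1 = 0 then a else b ⟨i - 1, by omega⟩

@[simp] theorem rowCases_zero [NeZero n] {α : Type*} (a : α) (b : Fin (n - 1) → α) :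
    rowCases a b 0 = a := by
  simp [rowCases]

@[simp] theorem rowCases_nodeRow {α : Type*} (a : α) (b : Fin (n - 1) → α) (k : Fin (n - 1)) :
    rowCases a b (nodeRow k) = b k := by
  simp [rowCases, nodeRow]

theorem swap_nodeRow_of_ne [NeZero n] {k m : Fin (n - 1)} (h : k ≠ m) :
    Equiv.swap 0 (nodeRow k) (nodeRow m) = nodeRow m :=
  Equiv.swap_apply_of_ne_of_ne (nodeRow_ne_zero m) (nodeRow_injective.ne h.symm)

theorem permP_mulVec (a b : Fin n) (v : Fin n → ℂ) (i : Fin n) :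
    (permP n a b *ᵥ v) i = v (Equiv.swap a b i) := by
  simp only [permP, mulVec, dotProduct, of_apply, ite_mul, one_mul, zero_mul]
  simp_rw [eq_comm (a := i), Equiv.swap_apply_eq_iff, sum_ite_eq', mem_univ, if_true]

theorem Amat_mulVec [NeZero n] (z : Fin (n - 1) → ℂ) (w : ℂ) (v : Fin n → ℂ) (i : Fin n) :
    (Amat n z w *ᵥ v) i = ∑ k, (w - z k)⁻¹ * v (Equiv.swap 0 (nodeRow k) i) := by
  simp only [Amat, sum_mulVec, smul_mulVec, Finset.sum_apply, Pi.smul_apply, smul_eq_mul]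
  exact sum_congr rfl fun k _ => congrArg _ (permP_mulVec _ _ v i)

open Lagrange

variable [NeZero n] (z : Fin (n - 1) → ℂ)

def SolvesTwistedKZ (N : Fin n → ℂ[X]) : Prop :=
  ∀ i, nodal univ z * derivative (N i) =
    ∑ k, nodal (univ.erase k) z * (N i - N (Equiv.swap 0 (nodeRow k) i))

variable {z}

theorem SolvesTwistedKZ.hasDerivAt {N : Fin n → ℂ[X]} (hN : SolvesTwistedKZ z N) {w : ℂ}
    (hw : ∀ k, w ≠ z k) (i : Fin n) :
    HasDerivAt (fun u => (N i).eval u / (nodal univ z).eval u)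
      (-(Amat n z w *ᵥ fun i => (N i).eval w / (nodal univ z).eval w) i) w := by
  have hNi := congrArg (eval w) (hN i)
  simp only [eval_mul, eval_finsetSum, eval_sub] at hNi
  set f := nodal univ z
  have hfw : f.eval w ≠ 0 := eval_nodal_not_at_node fun k _ => hw k
  have hinv : ∀ k, (w - z k)⁻¹ = (nodal (univ.erase k) z).eval w / f.eval w := fun k => by
    rw [eq_div_iff hfw, show f = _ from nodal_eq_mul_nodal_erase (mem_univ k), eval_mul,
      ← mul_assoc]
    simp [sub_ne_zero.2 (hw k)]
  refine ((Polynomial.hasDerivAt (N i) w).div (Polynomial.hasDerivAt f w) hfw).congr_deriv ?_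
  have hsum : ∑ k, (nodal (univ.erase k) z).eval w *
      ((N i).eval w - (N (Equiv.swap 0 (nodeRow k) i)).eval w) =
      (N i).eval w * ∑ k, (nodal (univ.erase k) z).eval w -
        ∑ k, (nodal (univ.erase k) z).eval w * (N (Equiv.swap 0 (nodeRow k) i)).eval w := by
    rw [mul_sum, ← sum_sub_distrib]
    exact sum_congr rfl fun k _ => by ring
  have hA : (Amat n z w *ᵥ fun i => (N i).eval w / f.eval w) i =
      (∑ k, (nodal (univ.erase k) z).eval w * (N (Equiv.swap 0 (nodeRow k) i)).eval w) /
        f.eval w ^ 2 := by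
    rw [Amat_mulVec, sum_div]
    exact sum_congr rfl fun k _ => by rw [hinv]; ring
  rw [hA, derivative_nodal, eval_finsetSum, ← neg_div]
  congr 1
  linear_combination hNi + hsum

variable (z) in
noncomputable def twistedCol (α : ℂ[X]) (D : Fin (n - 1) → ℂ[X]) : Fin n → ℂ[X] :=
  rowCases α fun m => α + (X - C (z m)) * D m

theorem solvesTwistedKZ_twistedCol {α : ℂ[X]} {D : Fin (n - 1) → ℂ[X]}
    (h₀ : derivative α = -∑ m, D m) (h₁ : ∀ m, (X - C (z m)) * derivative (D m) = -derivative α) :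
    SolvesTwistedKZ z (twistedCol z α D) := by
  intro i
  rcases eq_zero_or_eq_nodeRow i with rfl | ⟨m, rfl⟩
  · simp only [twistedCol, rowCases_zero, Equiv.swap_apply_left, rowCases_nodeRow, h₀, mul_neg,
      mul_sum, ← sum_neg_distrib]
    refine sum_congr rfl fun k _ => ?_
    rw [nodal_eq_mul_nodal_erase (mem_univ k)]
    ring
  · rw [sum_eq_single m (fun k _ hk => by rw [swap_nodeRow_of_ne hk, sub_self, mul_zero])
      (by simp)]
    simp only [twistedCol, rowCases_nodeRow, Equiv.swap_apply_right, rowCases_zero,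
      derivative_add, derivative_mul, derivative_sub, derivative_X, derivative_C]
    rw [nodal_eq_mul_nodal_erase (mem_univ m)]
    linear_combination ((X - C (z m)) * nodal (univ.erase m) z) * h₁ m

theorem twistedCol_eval_mulVec_eq_zero {α : Fin n → ℂ[X]} {D : Fin n → Fin (n - 1) → ℂ[X]}
    {w : ℂ} (hw : ∀ k, w ≠ z k) {v : Fin n → ℂ}
    (hv : (of fun i j => (twistedCol z (α j) (D j) i).eval w) *ᵥ v = 0) :
    ∑ j, (α j).eval w * v j = 0 ∧ ∀ m, ∑ j, (D j m).eval w * v j = 0 := by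
  have hrow : ∀ i, ∑ j, (twistedCol z (α j) (D j) i).eval w * v j = 0 := fun i => by
    simpa [mulVec, dotProduct] using congrFun hv i
  have h₀ : ∑ j, (α j).eval w * v j = 0 := by simpa [twistedCol] using hrow 0
  refine ⟨h₀, fun m => ?_⟩
  have hm := hrow (nodeRow m)
  simp only [twistedCol, rowCases_nodeRow, eval_add, eval_mul, eval_sub, eval_X, eval_C, add_mul,
    sum_add_distrib, h₀, zero_add, mul_assoc, ← mul_sum] at hm
  exact (mul_eq_zero.1 hm).resolve_left (sub_ne_zero.2 (hw m))

noncomputable def fundAlpha (F : ℂ[X]) (k₀ : Fin (n - 1)) : Fin n → ℂ[X] :=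
  rowCases 1 fun k => if k = k₀ then F else 0

noncomputable def fundD (H : Fin (n - 1) → ℂ[X]) (k₀ : Fin (n - 1)) :
    Fin n → Fin (n - 1) → ℂ[X] :=
  rowCases 0 fun k =>
    if k = k₀ then -H else fun m => C ((Pi.single k 1 - Pi.single k₀ 1 : Fin (n - 1) → ℂ) m)

theorem solvesTwistedKZ_fund {F : ℂ[X]} {H : Fin (n - 1) → ℂ[X]} (k₀ : Fin (n - 1))
    (hF : derivative F = nodal univ z) (hH : ∀ m, derivative (H m) = nodal (univ.erase m) z)
    (hHf : ∑ m, H m = nodal univ z) (j : Fin n) :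
    SolvesTwistedKZ z (twistedCol z (fundAlpha F k₀ j) (fundD H k₀ j)) := by
  rcases eq_zero_or_eq_nodeRow j with rfl | ⟨k, rfl⟩
  · exact solvesTwistedKZ_twistedCol (by simp [fundAlpha, fundD]) (by simp [fundAlpha, fundD])
  by_cases hk : k = k₀
  · refine solvesTwistedKZ_twistedCol (by simp [fundAlpha, fundD, hk, hF, hHf]) fun m => ?_
    simp [fundAlpha, fundD, hk, hF, hH, nodal_eq_mul_nodal_erase (mem_univ m)]
  · refine solvesTwistedKZ_twistedCol ?_ (by simp [fundAlpha, fundD, hk])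
    simp [fundAlpha, fundD, hk, ← map_sum, sum_pi_single']

theorem sum_fundD_eval (H : Fin (n - 1) → ℂ[X]) (k₀ : Fin (n - 1)) (w : ℂ) (j : Fin n) :
    ∑ m, (fundD H k₀ j m).eval w = if j = nodeRow k₀ then -(∑ m, H m).eval w else 0 := by
  rcases eq_zero_or_eq_nodeRow j with rfl | ⟨k, rfl⟩
  · simp [fundD, (nodeRow_ne_zero k₀).symm]
  by_cases hk : k = k₀
  · simp [fundD, hk, eval_finsetSum]
  · simp [fundD, hk, nodeRow_injective.eq_iff, sum_pi_single']

theorem det_fund_ne_zero {F : ℂ[X]} {H : Fin (n - 1) → ℂ[X]} (k₀ : Fin (n - 1))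
    (hHf : ∑ m, H m = nodal univ z) {w : ℂ} (hw : ∀ k, w ≠ z k) :
    (of fun i j => (twistedCol z (fundAlpha F k₀ j) (fundD H k₀ j) i).eval w).det ≠ 0 := by
  rw [Ne, ← exists_mulVec_eq_zero_iff]
  rintro ⟨v, hv0, hv⟩
  obtain ⟨hα, hD⟩ := twistedCol_eval_mulVec_eq_zero hw hv
  have hlog : v (nodeRow k₀) = 0 := by
    have hsum : ∑ m, ∑ j, (fundD H k₀ j m).eval w * v j = 0 := sum_eq_zero fun m _ => hD m
    rw [sum_comm] at hsum
    simp_rw [← sum_mul, sum_fundD_eval, hHf, ite_mul, zero_mul, sum_ite_eq', mem_univ, if_true,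
      neg_mul, neg_eq_zero] at hsum
    exact (mul_eq_zero.1 hsum).resolve_left (eval_nodal_not_at_node fun k _ => hw k)
  have hlin : ∀ m, v (nodeRow m) = 0 := fun m => by
    by_cases hm : m = k₀
    · exact hm ▸ hlog
    have hm' := hD m
    rw [sum_eq_single (nodeRow m) ?_ (by simp)] at hm'
    · simpa [fundD, hm] using hm'
    intro j _ hj
    rcases eq_zero_or_eq_nodeRow j with rfl | ⟨k, rfl⟩
    · simp [fundD]
    by_cases hk : k = k₀
    · simp [hk, hlog]
    · simp [fundD, hk, Pi.single_apply, (nodeRow_injective.ne_iff.1 hj).symm, hm]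
  have hconst : v 0 = 0 := by
    rw [sum_eq_single 0 (fun j _ hj => ?_) (by simp)] at hα
    · simpa [fundAlpha] using hα
    obtain ⟨k, rfl⟩ := (eq_zero_or_eq_nodeRow j).resolve_left hj
    simp [hlin]
  exact hv0 (funext fun j => by rcases eq_zero_or_eq_nodeRow j with rfl | ⟨k, rfl⟩ <;> simp [*])

end KZ

open KZ Lagrange

/-- For ρ = -1 the KZ system has a rational fundamental solution: there are n rational
vector solutions Y_j(z) = Σ_k L_{k,j}/(z-z_k) + Q_j(z) (Q_j a polynomial vector) of
Y' = -A(z)·Y whose determinant is not identically zero on ℂ ∖ {z₁,…,z_{n-1}}. -/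
theorem fundamental_rational_solution_rho_neg_one (n : ℕ) [NeZero n] (hn : 3 ≤ n)
    (z : Fin (n - 1) → ℂ) (hz : Function.Injective z) :
    ∃ (L : Fin n → Fin (n - 1) → Fin n → ℂ) (Q : Fin n → Fin n → Polynomial ℂ)
      (Y : Fin n → ℂ → Fin n → ℂ),
      (∀ (j : Fin n) (u : ℂ),
        Y j u = (∑ k : Fin (n - 1), (u - z k)⁻¹ • L j k) + fun i => (Q j i).eval u) ∧
      (∀ (j : Fin n) (w : ℂ), (∀ k, w ≠ z k) → ∀ i,
        HasDerivAt (fun u => Y j u i) (-(Amat n z w *ᵥ Y j w) i) w) ∧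
      (∃ w : ℂ, (∀ k, w ≠ z k) ∧ (Matrix.of fun i j => Y j w i).det ≠ 0) := by
  let k₀ : Fin (n - 1) := ⟨0, by omega⟩
  have : Nonempty (Fin (n - 1)) := ⟨k₀⟩
  let f := nodal univ z
  obtain ⟨F, hF⟩ := derivative_surjective f
  obtain ⟨H, hH, hHf⟩ := exists_derivative_eq_and_sum_eq (derivative_nodal (s := univ) (v := z))
  let N j := twistedCol z (fundAlpha F k₀ j) (fundD H k₀ j)
  let Y j u i := ∑ k, (u - z k)⁻¹ * (nodalWeight univ z k * (N j i %ₘ f).eval (z k)) +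
    (N j i /ₘ f).eval u
  have hY : ∀ j u, (∀ k, u ≠ z k) → Y j u = fun i => (N j i).eval u / f.eval u :=
    fun j u hu => funext fun i => (eval_div_eval_nodal hz.injOn (fun k _ => hu k) _).symm
  refine ⟨fun j k i => nodalWeight univ z k * (N j i %ₘ f).eval (z k), fun j i => N j i /ₘ f, Y,
    fun j u => by ext i; simp [Y], fun j w hw i => ?_, ?_⟩
  · have hev : (fun u => Y j u i) =ᶠ[nhds w] fun u => (N j i).eval u / f.eval u := by
      filter_upwards [(Set.finite_range z).isClosed.isOpen_compl.mem_nhds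
        (by simpa [eq_comm] using hw)] with u hu
      rw [hY j u (by simpa [eq_comm] using hu)]
    rw [hY j w hw]
    exact ((solvesTwistedKZ_fund k₀ hF hH hHf j).hasDerivAt hw i).congr_of_eventuallyEq hev
  · obtain ⟨w, hw⟩ := (Set.finite_range z).infinite_compl.nonempty
    have hw' : ∀ k, w ≠ z k := by simpa [eq_comm] using hw
    have hM : (of fun i j => Y j w i) = (f.eval w)⁻¹ • of fun i j => (N j i).eval w := by
      ext i j
      simp [hY j w hw', div_eq_inv_mul]
    refine ⟨w, hw', ?_⟩
    rw [hM, det_smul]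
    exact mul_ne_zero (pow_ne_zero _ (inv_ne_zero (eval_nodal_not_at_node fun k _ => hw' k)))
      (det_fund_ne_zero k₀ hHf hw')
end

section
/- Let m₁, m₂ be integers and let z₁ ≠ z₂ be complex numbers. Let P₁ and P₂ be the 3×3 permutation matrices of the transpositions (1 2) and (1 3) respectively, and define A(z) = m₁·P₁/(z−z₁) + m₂·P₂/(z−z₂). Suppose there is no integer s with s² = m₁² − m₁m₂ + m₂². Then there is no matrix function W : ℂ ∖ {z₁, z₂} → M₃(ℂ) all of whose entries are given by rational functions of z, with det W not identically zero, satisfying W′(z) = A(z)·W(z) for all z ∈ ℂ ∖ {z₁, z₂} at which all entries of W are defined. -/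
/-
The line spanned by (1, 1, 1) is invariant under P₁ and P₂ and carries the rational solution
(z - z₁)^m₁ (z - z₂)^m₂, so the obstruction lives in the quotient system, which is satisfied by the
row differences u = W₀ⱼ - W₁ⱼ, v = W₁ⱼ - W₂ⱼ of a column of W; as det W ≠ 0, some column gives
(u, v) ≠ 0. At z = ∞ this system reads z (u, v)' ≈ M (u, v) with M = [[-m₁, -m₂], [m₁ - m₂, m₁]].
Writing (u, v) = (U, V) / Q with polynomials and comparing top coefficients shows that the integer
deg (U, V) - deg Q is an eigenvalue of M, so its square is -det M = m₁² - m₁m₂ + m₂².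
-/

open Matrix

open Polynomial Topology

namespace Polynomial

variable {R : Type*}

lemma coeff_X_mul_derivative [Semiring R] (p : R[X]) (n : ℕ) :
    (X * derivative p).coeff n = p.coeff n * n := by
  cases n with
  | zero => simp
  | succ n => rw [coeff_X_mul, coeff_derivative]; push_cast; rfl

lemma natDegree_X_mul_derivative_le [Semiring R] (p : R[X]) :
    (X * derivative p).natDegree ≤ p.natDegree := by
  rw [natDegree_le_iff_coeff_eq_zero]
  intro n hn
  rw [coeff_X_mul_derivative, coeff_eq_zero_of_natDegree_lt hn, zero_mul]

lemma exists_forall_natDegree_le_and_coeff_ne_zero [Semiring R] {ι : Type*} [Finite ι]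
    {P : ι → R[X]} (hP : P ≠ 0) : ∃ N, (∀ i, (P i).natDegree ≤ N) ∧ (fun i => (P i).coeff N) ≠ 0 := by
  classical
  have := Fintype.ofFinite ι
  obtain ⟨i₀, hi₀⟩ := Function.ne_iff.mp hP
  obtain ⟨i₁, hi₁, hmax⟩ := Finset.exists_max_image (Finset.univ.filter fun i => P i ≠ 0)
    (fun i => (P i).natDegree) ⟨i₀, by simpa using hi₀⟩
  refine ⟨(P i₁).natDegree, fun i => ?_,
    Function.ne_iff.mpr ⟨i₁, leadingCoeff_ne_zero.mpr (by simpa using hi₁)⟩⟩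
  by_cases hi : P i = 0
  · simp [hi]
  · exact hmax i (by simpa using hi)

variable [CommRing R] {a b : R[X]} {m n : ℕ}

lemma X_mul_wronskian (a b : R[X]) :
    X * wronskian a b = a * (X * derivative b) - X * derivative a * b := by
  rw [wronskian]; ring

lemma natDegree_X_mul_wronskian_le (ha : a.natDegree ≤ m) (hb : b.natDegree ≤ n) :
    (X * wronskian a b).natDegree ≤ m + n := by
  rw [X_mul_wronskian]
  exact (max_self (m + n)).le.trans' <| natDegree_sub_le_of_le
    (natDegree_mul_le_of_le ha ((natDegree_X_mul_derivative_le b).trans hb))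
    (natDegree_mul_le_of_le ((natDegree_X_mul_derivative_le a).trans ha) hb)

lemma coeff_X_mul_wronskian (ha : a.natDegree ≤ m) (hb : b.natDegree ≤ n) :
    (X * wronskian a b).coeff (m + n) = ((n : R) - m) * a.coeff m * b.coeff n := by
  rw [X_mul_wronskian, coeff_sub,
    coeff_mul_add_eq_of_natDegree_le ha ((natDegree_X_mul_derivative_le b).trans hb),
    coeff_mul_add_eq_of_natDegree_le ((natDegree_X_mul_derivative_le a).trans ha) hb,
    coeff_X_mul_derivative, coeff_X_mul_derivative]
  ring

end Polynomial

/- Since `(P / Q)' = wronskian Q P / Q ^ 2`, the hypothesis says that `P / Q` solves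
`f' = (B / D) f`, and `B / D ~ M / z` at infinity with `M = B.map (coeff · d)` (for `D` monic).
The eigenvector is the vector of top coefficients of `P`. -/
open Module.End in
theorem hasEigenvalue_of_wronskian_system {R ι : Type*} [CommRing R] [IsDomain R] [Fintype ι]
    [DecidableEq ι] {d : ℕ} {P : ι → R[X]} {Q D : R[X]} {B : Matrix ι ι R[X]}
    (hP : P ≠ 0) (hQ : Q ≠ 0) (hD : D.natDegree ≤ d + 1) (hB : ∀ i j, (B i j).natDegree ≤ d)
    (h : ∀ i, D * wronskian Q (P i) = ∑ j, B i j * P j * Q) :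
    ∃ k : ℤ, HasEigenvalue (Matrix.toLin' (B.map (coeff · d))) (D.coeff (d + 1) * k) := by
  obtain ⟨N, hPN, hc⟩ := exists_forall_natDegree_le_and_coeff_ne_zero hP
  set m := Q.natDegree
  have hPQ : ∀ j, (P j * Q).natDegree ≤ N + m := fun j => natDegree_mul_le_of_le (hPN j) le_rfl
  refine ⟨N - m, hasEigenvalue_of_hasEigenvector ⟨mem_eigenspace_iff.mpr ?_, hc⟩⟩
  ext i
  have hcoeff := congrArg (coeff · (d + 1 + (m + N))) (congrArg (X * ·) (h i))
  rw [mul_left_comm, coeff_mul_add_eq_of_natDegree_le hD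
      (natDegree_X_mul_wronskian_le le_rfl (hPN i)), coeff_X_mul_wronskian le_rfl (hPN i),
    show d + 1 + (m + N) = d + (N + m) + 1 by ring, coeff_X_mul, finsetSum_coeff] at hcoeff
  have hterm : ∀ j, (B i j * P j * Q).coeff (d + (N + m)) =
      (B i j).coeff d * (P j).coeff N * Q.coeff m := fun j => by
    rw [mul_assoc, coeff_mul_add_eq_of_natDegree_le (hB i j) (hPQ j),
      coeff_mul_add_eq_of_natDegree_le (hPN j) le_rfl, mul_assoc]
  simp only [hterm] at hcoeff
  have hQm : Q.coeff m ≠ 0 := leadingCoeff_ne_zero.mpr hQ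
  apply mul_right_cancel₀ hQm
  simp only [Matrix.toLin'_apply, Matrix.mulVec, dotProduct, Matrix.map_apply, Finset.sum_mul,
    Pi.smul_apply, smul_eq_mul]
  push_cast
  linear_combination -hcoeff

theorem wronskian_system_of_hasDerivAt {𝕜 ι : Type*} [NontriviallyNormedField 𝕜] [Fintype ι]
    {f : ι → 𝕜 → 𝕜} {P : ι → 𝕜[X]} {Q D : 𝕜[X]} {B : Matrix ι ι 𝕜[X]} {S : Set 𝕜}
    (hS : S.Finite) (hQ : ∀ z ∉ S, Q.eval z ≠ 0) (hD : ∀ z ∉ S, D.eval z ≠ 0)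
    (hf : ∀ z ∉ S, ∀ i, f i z = (P i).eval z / Q.eval z)
    (hf' : ∀ z ∉ S, ∀ i, HasDerivAt (f i) ((∑ j, (B i j).eval z * f j z) / D.eval z) z)
    (i : ι) : D * wronskian Q (P i) = ∑ j, B i j * P j * Q := by
  refine eq_of_infinite_eval_eq _ _ (hS.infinite_compl.mono fun z hz => ?_)
  have hfz : f i =ᶠ[𝓝 z] fun u => (P i).eval u / Q.eval u :=
    Filter.mem_of_superset (hS.isClosed.isOpen_compl.mem_nhds hz) fun u hu => hf u hu i
  have hderiv := ((P i).hasDerivAt z).div (Q.hasDerivAt z) (hQ z hz)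
  have key := (hf' z hz i).unique (hderiv.congr_of_eventuallyEq hfz)
  simp only [hf z hz, ← mul_div_assoc, ← Finset.sum_div] at key
  have hQz := hQ z hz
  have hDz := hD z hz
  simp only [Set.mem_ofPred_eq, eval_mul, wronskian, eval_sub, eval_finsetSum]
  rw [← Finset.sum_mul]
  field_simp at key
  linear_combination -key

open Module.End in
lemma sq_eq_of_hasEigenvalue {R : Type*} [CommRing R] [IsDomain R] {a b μ : R}
    (h : HasEigenvalue (toLin' !![-a, -b; a - b, a]) μ) : μ ^ 2 = a ^ 2 - a * b + b ^ 2 := by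
  rw [hasEigenvalue_iff_isRoot_charpoly, charpoly_toLin', charpoly_fin_two] at h
  simp [trace_fin_two, det_fin_two] at h
  linear_combination h

def rowDifferences {α R : Type*} [Sub R] {m n : ℕ} (W : α → Matrix (Fin (m + 1)) (Fin n) R)
    (j : Fin n) (i : Fin m) (z : α) : R :=
  W z i.castSucc j - W z i.succ j

noncomputable def rowDifferenceSystem (m₁ m₂ z₁ z₂ : ℂ) : Matrix (Fin 2) (Fin 2) ℂ[X] :=
  !![-(C m₁ * (X - C z₂)), -(C m₂ * (X - C z₁));
    C m₁ * (X - C z₂) - C m₂ * (X - C z₁), C m₁ * (X - C z₂)]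

lemma rowDifferenceSystem_natDegree_le (m₁ m₂ z₁ z₂ : ℂ) (i j : Fin 2) :
    (rowDifferenceSystem m₁ m₂ z₁ z₂ i j).natDegree ≤ 1 := by
  fin_cases i <;> fin_cases j <;> simp [rowDifferenceSystem] <;> compute_degree

lemma rowDifferenceSystem_map_coeff_one (m₁ m₂ z₁ z₂ : ℂ) :
    (rowDifferenceSystem m₁ m₂ z₁ z₂).map (coeff · 1) = !![-m₁, -m₂; m₁ - m₂, m₁] := by
  ext i j
  fin_cases i <;> fin_cases j <;> simp [rowDifferenceSystem, coeff_X]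

lemma hasDerivAt_rowDifferences {m₁ m₂ z₁ z₂ z : ℂ} {W : ℂ → Matrix (Fin 3) (Fin 3) ℂ}
    {j : Fin 3} (hz₁ : z ≠ z₁) (hz₂ : z ≠ z₂)
    (hW : ∀ i, HasDerivAt (fun u => W u i j)
      ((((m₁ / (z - z₁)) • permP 3 0 1 + (m₂ / (z - z₂)) • permP 3 0 2) * W z) i j) z)
    (i : Fin 2) :
    HasDerivAt (rowDifferences W j i)
      ((∑ k, (rowDifferenceSystem m₁ m₂ z₁ z₂ i k).eval z * rowDifferences W j k z) /
        ((X - C z₁) * (X - C z₂)).eval z) z := by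
  have h₁ : z - z₁ ≠ 0 := sub_ne_zero.mpr hz₁
  have h₂ : z - z₂ ≠ 0 := sub_ne_zero.mpr hz₂
  refine ((hW i.castSucc).sub (hW i.succ)).congr_deriv ?_
  fin_cases i <;>
  · simp [rowDifferences, rowDifferenceSystem, permP, mul_apply, Fin.sum_univ_three,
      Equiv.swap_apply_def]
    field_simp
    ring

noncomputable def rowDifferenceNumerators (p q : Fin 3 → Fin 3 → ℂ[X]) (j : Fin 3) :
    Fin 2 → ℂ[X] :=
  ![p 0 j * q 1 j * q 2 j - p 1 j * q 0 j * q 2 j, p 1 j * q 0 j * q 2 j - p 2 j * q 0 j * q 1 j]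

lemma rowDifferences_eq_div {p q : Fin 3 → Fin 3 → ℂ[X]} {W : ℂ → Matrix (Fin 3) (Fin 3) ℂ}
    (hW : ∀ z, W z = Matrix.of fun i j => (p i j).eval z / (q i j).eval z) {j : Fin 3} {z : ℂ}
    (hz : ∀ i, (q i j).eval z ≠ 0) (i : Fin 2) :
    rowDifferences W j i z =
      (rowDifferenceNumerators p q j i).eval z / (q 0 j * q 1 j * q 2 j).eval z := by
  have := hz 0
  have := hz 1
  have := hz 2
  fin_cases i <;>
  · simp [rowDifferences, rowDifferenceNumerators, hW]
    field_simp

theorem no_rational_fundamental_solution_general (m₁ m₂ : ℤ) (z₁ z₂ : ℂ)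
    (hs : ¬ ∃ s : ℤ, s ^ 2 = m₁ ^ 2 - m₁ * m₂ + m₂ ^ 2) :
    ¬ ∃ (p q : Fin 3 → Fin 3 → Polynomial ℂ) (W : ℂ → Matrix (Fin 3) (Fin 3) ℂ),
      (∀ i j, q i j ≠ 0) ∧
      (∀ z : ℂ, W z = Matrix.of fun i j => (p i j).eval z / (q i j).eval z) ∧
      (∃ w : ℂ, w ≠ z₁ ∧ w ≠ z₂ ∧ (∀ i j, (q i j).eval w ≠ 0) ∧ (W w).det ≠ 0) ∧
      (∀ z : ℂ, z ≠ z₁ → z ≠ z₂ → (∀ i j, (q i j).eval z ≠ 0) → ∀ i j,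
        HasDerivAt (fun u => W u i j)
          (((((m₁ : ℂ) / (z - z₁)) • permP 3 0 1 + ((m₂ : ℂ) / (z - z₂)) • permP 3 0 2)
            * W z) i j) z) := by
  rintro ⟨p, q, W, hq, hW, ⟨w, -, -, hwq, hdet⟩, hW'⟩
  obtain ⟨j, hj⟩ : ∃ j, W w 0 j ≠ W w 1 j := by
    by_contra! h
    exact hdet (det_zero_of_row_eq zero_ne_one (funext h))
  set S : Set ℂ := insert z₁ (insert z₂ {z | (∏ i, ∏ k, q i k).IsRoot z})
  have hS : S.Finite :=
    ((finite_setOfPred_isRoot (by simp [Finset.prod_ne_zero_iff, hq])).insert _).insert _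
  have hgood : ∀ z ∉ S, z ≠ z₁ ∧ z ≠ z₂ ∧ ∀ i k, (q i k).eval z ≠ 0 := by
    intro z hz
    simpa [S, eval_prod, Finset.prod_ne_zero_iff] using hz
  have hsystem := wronskian_system_of_hasDerivAt (B := rowDifferenceSystem m₁ m₂ z₁ z₂) hS
    (fun z hz => by simp [(hgood z hz).2.2])
    (fun z hz => by simp [sub_ne_zero, (hgood z hz).1, (hgood z hz).2.1])
    (fun z hz => rowDifferences_eq_div hW fun i => (hgood z hz).2.2 i j)
    (fun z hz => hasDerivAt_rowDifferences (hgood z hz).1 (hgood z hz).2.1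
      fun i => hW' z (hgood z hz).1 (hgood z hz).2.1 (hgood z hz).2.2 i j)
  have hP : rowDifferenceNumerators p q j ≠ 0 := fun h0 => hj <| sub_eq_zero.mp <| by
    simpa [h0, rowDifferences] using rowDifferences_eq_div hW (fun i => hwq i j) 0
  obtain ⟨k, hk⟩ := hasEigenvalue_of_wronskian_system hP (by simp [hq]) (by compute_degree)
    (rowDifferenceSystem_natDegree_le _ _ _ _) hsystem
  have hD : ((X - C z₁) * (X - C z₂)).coeff 2 = 1 := by
    simp [mul_sub, sub_mul, coeff_X, coeff_mul_C]
  rw [rowDifferenceSystem_map_coeff_one, hD, one_mul] at hk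
  exact hs ⟨k, by exact_mod_cast sq_eq_of_hasEigenvalue hk⟩

/-- If m₁² - m₁m₂ + m₂² is not the square of an integer, then the system
W' = A(z)·W with A(z) = m₁·P₁/(z-z₁) + m₂·P₂/(z-z₂) (P₁, P₂ the permutation
matrices of (1 2) and (1 3)) has no fundamental solution all of whose entries are
rational functions of z:  there are no polynomials p i j, q i j (q i j ≠ 0) such that
W(z) = (p i j (z)/q i j (z)) satisfies the equation wherever its entries are defined
and det W is not identically zero. -/
theorem no_rational_fundamental_solution (m₁ m₂ : ℤ) (z₁ z₂ : ℂ) (hz : z₁ ≠ z₂)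
    (hs : ¬ ∃ s : ℤ, s ^ 2 = m₁ ^ 2 - m₁ * m₂ + m₂ ^ 2) :
    ¬ ∃ (p q : Fin 3 → Fin 3 → Polynomial ℂ) (W : ℂ → Matrix (Fin 3) (Fin 3) ℂ),
      (∀ i j, q i j ≠ 0) ∧
      (∀ z : ℂ, W z = Matrix.of fun i j => (p i j).eval z / (q i j).eval z) ∧
      (∃ w : ℂ, w ≠ z₁ ∧ w ≠ z₂ ∧ (∀ i j, (q i j).eval w ≠ 0) ∧ (W w).det ≠ 0) ∧
      (∀ z : ℂ, z ≠ z₁ → z ≠ z₂ → (∀ i j, (q i j).eval z ≠ 0) → ∀ i j,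
        HasDerivAt (fun u => W u i j)
          (((((m₁ : ℂ) / (z - z₁)) • permP 3 0 1 + ((m₂ : ℂ) / (z - z₂)) • permP 3 0 2)
            * W z) i j) z) :=
  no_rational_fundamental_solution_general m₁ m₂ z₁ z₂ hs
end
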